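/- Let g = (√5−1)/2, G = (√5+1)/2 and α ∈ (g,1) ∪ (1,G). With φ_α(x) = 1/|x| − d_α(x), d_α(x) = 2⌊1/(2|x|)+(1−α)/2⌋+1, and interpreting φ_α at the endpoints as φ_α(α) = 1/α − 1 and φ_α(α−2) = 1/(2−α) − 1, one has φ_α²(α) = φ_α²(α−2), i.e. φ_α(φ_α(α)) = φ_α(φ_α(α−2)). -/

import Mathlib

/-- The digit function of the α-OCF Gauss map. -/
noncomputable def dA (α x : ℝ) : ℤ := 2 * ⌊1/(2*|x|) + (1-α)/2⌋ + 1

/-- The α-OCF Gauss map. -/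
noncomputable def phiA (α x : ℝ) : ℝ := 1/|x| - dA α x

/-!
Writing `x = 1/α - 1` and `y = 1/(2-α) - 1`, one has `1/|x| = α/|1-α|` and
`1/|y| = (2-α)/|1-α|`, so `1/|y| - 1/|x| = ±2`. Shifting `1/|x|` by an even integer shifts the
digit `d_α(x)` by the same amount, so `φ_α(x) = φ_α(y)`.
-/

lemma phiA_eq_of_one_div_abs_eq_add {α u v : ℝ} (n : ℤ) (h : 1/|v| = 1/|u| + 2*n) :
    phiA α v = phiA α u := by
  have hfloor : 1/(2*|v|) + (1-α)/2 = (1/(2*|u|) + (1-α)/2) + n := by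
    simp only [one_div, mul_inv] at h ⊢
    rw [h]; ring
  unfold phiA dA
  rw [h, hfloor, Int.floor_add_intCast]
  push_cast; ring

lemma one_div_abs_one_div_sub_one {a : ℝ} (ha : 0 < a) : 1/|1/a - 1| = a/|1-a| := by
  rw [show 1/a - 1 = (1-a)/a by field_simp, abs_div, abs_of_pos ha, one_div_div]

lemma pos_lt_two_ne_one_of_mem_golden {α : ℝ}
    (hα : α ∈ Set.Ioo ((√5 - 1)/2) 1 ∪ Set.Ioo 1 ((√5 + 1)/2)) :
    0 < α ∧ α < 2 ∧ α ≠ 1 := by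
  have hsq := Real.sq_sqrt (show (0:ℝ) ≤ 5 by norm_num)
  have h1 : 1 < √5 := by nlinarith [Real.sqrt_nonneg 5]
  have h3 : √5 < 3 := by nlinarith [Real.sqrt_nonneg 5]
  rcases hα with ⟨hl, hr⟩ | ⟨hl, hr⟩
  · exact ⟨by linarith, by linarith, hr.ne⟩
  · exact ⟨by linarith, by linarith, hl.ne'⟩

theorem stmt4 (α : ℝ)
    (hα : α ∈ Set.Ioo ((Real.sqrt 5 - 1)/2) 1 ∪ Set.Ioo 1 ((Real.sqrt 5 + 1)/2)) :
    phiA α (1/α - 1) = phiA α (1/(2-α) - 1) := by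
  obtain ⟨hα0, hα2, hα1⟩ := pos_lt_two_ne_one_of_mem_golden hα
  have hx := one_div_abs_one_div_sub_one hα0
  have hy := one_div_abs_one_div_sub_one (sub_pos.mpr hα2)
  rw [show 1 - (2 - α) = α - 1 by ring, abs_sub_comm α 1] at hy
  rcases hα1.lt_or_gt with hlt | hgt
  · have hne : 1 - α ≠ 0 := sub_ne_zero.mpr hlt.ne'
    refine (phiA_eq_of_one_div_abs_eq_add 1 ?_).symm
    rw [hx, hy, abs_of_pos (sub_pos.mpr hlt)]
    field_simp; ring
  · have hne : 1 - α ≠ 0 := sub_ne_zero.mpr hgt.ne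
    refine (phiA_eq_of_one_div_abs_eq_add (-1) ?_).symm
    rw [hx, hy, abs_of_neg (sub_neg.mpr hgt)]
    field_simp; push_cast; ring
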